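/- Let (G, B) be a nonsimple metric n-Lie algebra with dim G > 1 and J a nonzero minimal ideal of G. Then (1) J is either abelian (i.e., [J,J,G,...,G]=0) or simple; (2) J ⊆ [G,...,G] or J ⊆ C(G); (3) if H is another minimal ideal with H ≠ J, then [J,H,G,...,G] = 0. -/

import Mathlib

open scoped BigOperators

section NLiePreamble

variable {n : ℕ} {G : Type*} [AddCommGroup G] [Module ℂ G]

/-- The inner derivation `ad_y z = [y₁, …, y_{n+1}, z]` determined by an
`(n+2)`-ary alternating bracket. -/
def nAd (br : AlternatingMap ℂ G G (Fin (n + 2))) (y : Fin (n + 1) → G) (z : G) : G :=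
  br (Fin.snoc y z)

/-- The generalized Jacobi identity: the bracket makes `G` an `(n+2)`-Lie algebra. -/
def IsNLie (br : AlternatingMap ℂ G G (Fin (n + 2))) : Prop :=
  ∀ (x : Fin (n + 2) → G) (y : Fin (n + 1) → G),
    nAd br y (br x) = ∑ i, br (Function.update x i (nAd br y (x i)))

/-- A submodule `I` is an ideal: `[I, G, …, G] ⊆ I`. -/
def IsIdeal (br : AlternatingMap ℂ G G (Fin (n + 2))) (I : Submodule ℂ G) : Prop :=
  ∀ (y : Fin (n + 1) → G), ∀ x ∈ I, br (Fin.snoc y x) ∈ I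

/-- Invariance of a bilinear form under the bracket. -/
def IsInvariantForm (br : AlternatingMap ℂ G G (Fin (n + 2)))
    (K : LinearMap.BilinForm ℂ G) : Prop :=
  ∀ (x : Fin (n + 1) → G) (y₁ y₂ : G),
    K (br (Fin.snoc x y₁)) y₂ = - K (br (Fin.snoc x y₂)) y₁

/-- A metric on an `n`-Lie algebra: a nondegenerate invariant symmetric bilinear form. -/
def IsMetric (br : AlternatingMap ℂ G G (Fin (n + 2)))
    (B : LinearMap.BilinForm ℂ G) : Prop :=
  B.Nondegenerate ∧ (∀ x y : G, B x y = B y x) ∧ IsInvariantForm br B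

/-- The span `[W₁, …, W_{n+2}]` of all brackets with entries in the given subspaces. -/
def bracketSpan (br : AlternatingMap ℂ G G (Fin (n + 2)))
    (W : Fin (n + 2) → Submodule ℂ G) : Submodule ℂ G :=
  Submodule.span ℂ {z | ∃ w : Fin (n + 2) → G, (∀ i, w i ∈ W i) ∧ z = br w}

/-- The derived algebra `[G, …, G]`. -/
def derivedAlg (br : AlternatingMap ℂ G G (Fin (n + 2))) : Submodule ℂ G :=
  bracketSpan br fun _ => ⊤

/-- `[I, …, I]` for a subspace `I`. -/
def derivedStep (br : AlternatingMap ℂ G G (Fin (n + 2))) (I : Submodule ℂ G) :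
    Submodule ℂ G :=
  bracketSpan br fun _ => I

/-- `[J, H, G, …, G]` for subspaces `J, H`. -/
def pairBracket (br : AlternatingMap ℂ G G (Fin (n + 2))) (J H : Submodule ℂ G) :
    Submodule ℂ G :=
  bracketSpan br (Fin.cons J (Fin.cons H fun _ => (⊤ : Submodule ℂ G)))

/-- `[I, G, …, G]` for a subspace `I`. -/
def idealBracket (br : AlternatingMap ℂ G G (Fin (n + 2))) (I : Submodule ℂ G) :
    Submodule ℂ G :=
  bracketSpan br (Fin.cons I fun _ => (⊤ : Submodule ℂ G))

/-- The centralizer `C_G(I) = {x : [x, I, G, …, G] = 0}` of a subspace `I`. -/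
def centralizer (br : AlternatingMap ℂ G G (Fin (n + 2))) (I : Submodule ℂ G) :
    Submodule ℂ G where
  carrier := {x | ∀ v ∈ I, ∀ y : Fin n → G, br (Fin.cons x (Fin.cons v y)) = 0}
  add_mem' := by
    intro a b ha hb v hv y
    have := br.toMultilinearMap.cons_add (Fin.cons v y) a b
    simp only [AlternatingMap.coe_multilinearMap] at this
    rw [this, ha v hv y, hb v hv y, add_zero]
  zero_mem' := by
    intro v hv y
    have := br.toMultilinearMap.cons_smul (Fin.cons v y) (0 : ℂ) 0
    simpa using (br.toMultilinearMap.map_coord_zero (m := Fin.cons 0 (Fin.cons v y)) 0 rfl)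
  smul_mem' := by
    intro c a ha v hv y
    have := br.toMultilinearMap.cons_smul (Fin.cons v y) c a
    simp only [AlternatingMap.coe_multilinearMap] at this
    rw [this, ha v hv y, smul_zero]

/-- The center `C(G)`. -/
def center (br : AlternatingMap ℂ G G (Fin (n + 2))) : Submodule ℂ G :=
  centralizer br ⊤

/-- Nondegeneracy of `B` restricted to a subspace `W`. -/
def NondegOn (B : LinearMap.BilinForm ℂ G) (W : Submodule ℂ G) : Prop :=
  ∀ x ∈ W, (∀ y ∈ W, B x y = 0) → x = 0

/-- `(G, B)` is `B`-irreducible: no nontrivial nondegenerate ideals. -/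
def BIrreducible (br : AlternatingMap ℂ G G (Fin (n + 2)))
    (B : LinearMap.BilinForm ℂ G) : Prop :=
  ∀ I : Submodule ℂ G, IsIdeal br I → NondegOn B I → I = ⊥ ∨ I = ⊤

/-- `W` is a subalgebra. -/
def IsSubalgebra (br : AlternatingMap ℂ G G (Fin (n + 2))) (W : Submodule ℂ G) : Prop :=
  ∀ x : Fin (n + 2) → G, (∀ i, x i ∈ W) → br x ∈ W

/-- `I` is an ideal of the subalgebra `W`. -/
def IsIdealOf (br : AlternatingMap ℂ G G (Fin (n + 2))) (W I : Submodule ℂ G) : Prop :=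
  I ≤ W ∧ ∀ (y : Fin (n + 1) → G), (∀ i, y i ∈ W) → ∀ x ∈ I, br (Fin.snoc y x) ∈ I

/-- The subalgebra `W` is a simple `n`-Lie algebra. -/
def IsSimpleAlg (br : AlternatingMap ℂ G G (Fin (n + 2))) (W : Submodule ℂ G) : Prop :=
  derivedStep br W ≠ ⊥ ∧ ∀ I : Submodule ℂ G, IsIdealOf br W I → I = ⊥ ∨ I = W

/-- The subalgebra `W` is strong semisimple: a direct sum of simple ideals. -/
def IsStrongSemisimple (br : AlternatingMap ℂ G G (Fin (n + 2)))
    (W : Submodule ℂ G) : Prop :=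
  ∃ (m : ℕ) (S : Fin m → Submodule ℂ G),
    (∀ i, IsIdealOf br W (S i) ∧ IsSimpleAlg br (S i)) ∧
    iSupIndep S ∧ (⨆ i, S i) = W

/-- `I` is solvable (via the derived series). -/
def NLieSolvable (br : AlternatingMap ℂ G G (Fin (n + 2))) (I : Submodule ℂ G) : Prop :=
  ∃ k : ℕ, (derivedStep br)^[k] I = ⊥

/-- `R` is the radical: the maximal solvable ideal. -/
def NLieRadical (br : AlternatingMap ℂ G G (Fin (n + 2))) (R : Submodule ℂ G) : Prop :=
  IsIdeal br R ∧ NLieSolvable br R ∧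
    ∀ I : Submodule ℂ G, IsIdeal br I → NLieSolvable br I → I ≤ R

/-- A Levi decomposition `G = S ⊕ R`. -/
def IsLeviDecomp (br : AlternatingMap ℂ G G (Fin (n + 2)))
    (S R : Submodule ℂ G) : Prop :=
  NLieRadical br R ∧ IsSubalgebra br S ∧ IsStrongSemisimple br S ∧ IsCompl S R

/-- A minimal ideal of `G`. -/
def IsMinimalIdeal (br : AlternatingMap ℂ G G (Fin (n + 2))) (J : Submodule ℂ G) : Prop :=
  IsIdeal br J ∧ J ≠ ⊥ ∧
    ∀ I : Submodule ℂ G, IsIdeal br I → I ≤ J → I = ⊥ ∨ I = J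

/-- The socle: the sum of all minimal ideals. -/
def socle (br : AlternatingMap ℂ G G (Fin (n + 2))) : Submodule ℂ G :=
  sSup {J | IsMinimalIdeal br J}

/-- `H` is an `S`-submodule: `[S, …, S, H] ⊆ H`. -/
def IsSModule (br : AlternatingMap ℂ G G (Fin (n + 2))) (S H : Submodule ℂ G) : Prop :=
  ∀ (y : Fin (n + 1) → G), (∀ i, y i ∈ S) → ∀ x ∈ H, br (Fin.snoc y x) ∈ H

/-- `H` is an irreducible `S`-submodule. -/
def IsIrreducibleSModule (br : AlternatingMap ℂ G G (Fin (n + 2)))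
    (S H : Submodule ℂ G) : Prop :=
  IsSModule br S H ∧ H ≠ ⊥ ∧
    ∀ K : Submodule ℂ G, K ≤ H → IsSModule br S K → K = ⊥ ∨ K = H

/-- The space of invariant symmetric bilinear forms on `G`. -/
def invSymForms (br : AlternatingMap ℂ G G (Fin (n + 2))) :
    Submodule ℂ (LinearMap.BilinForm ℂ G) where
  carrier := {K | (∀ x y : G, K x y = K y x) ∧ IsInvariantForm br K}
  add_mem' := by
    rintro K L ⟨hK1, hK2⟩ ⟨hL1, hL2⟩
    refine ⟨fun x y => by simp [hK1 x y, hL1 x y], fun x y₁ y₂ => ?_⟩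
    simp only [LinearMap.add_apply]
    rw [hK2 x y₁ y₂, hL2 x y₁ y₂]; ring
  zero_mem' := ⟨fun x y => by simp, fun x y₁ y₂ => by simp⟩
  smul_mem' := by
    rintro c K ⟨hK1, hK2⟩
    refine ⟨fun x y => by simp [hK1 x y], fun x y₁ y₂ => ?_⟩
    simp only [LinearMap.smul_apply, smul_eq_mul]
    rw [hK2 x y₁ y₂]; ring

/-- The span of all nondegenerate invariant symmetric bilinear forms (the metric space `B(G)`). -/
def metricSpan (br : AlternatingMap ℂ G G (Fin (n + 2))) :
    Submodule ℂ (LinearMap.BilinForm ℂ G) :=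
  Submodule.span ℂ {K : LinearMap.BilinForm ℂ G | IsMetric br K}

/-- `Γ_B(G)`: `B`-self-adjoint elements of the centroid. -/
def centroidB (br : AlternatingMap ℂ G G (Fin (n + 2)))
    (B : LinearMap.BilinForm ℂ G) : Submodule ℂ (G →ₗ[ℂ] G) where
  carrier := {φ | (∀ (x : Fin (n + 1) → G) (z : G),
      φ (br (Fin.snoc x z)) = br (Fin.snoc x (φ z))) ∧
    ∀ x y : G, B (φ x) y = B x (φ y)}
  add_mem' := by
    rintro φ ψ ⟨hφ1, hφ2⟩ ⟨hψ1, hψ2⟩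
    constructor
    · intro x z
      have hadd := br.toMultilinearMap.snoc_add x (φ z) (ψ z)
      simp only [AlternatingMap.coe_multilinearMap] at hadd
      simp [hφ1 x z, hψ1 x z, hadd]
    · intro x y; simp [hφ2 x y, hψ2 x y]
  zero_mem' := by
    constructor
    · intro x z
      have h0 := br.toMultilinearMap.map_coord_zero (m := Fin.snoc x (0 : G)) (Fin.last _)
        (by simp)
      simp only [AlternatingMap.coe_multilinearMap] at h0
      simp [h0]
    · intro x y; simp
  smul_mem' := by
    rintro c φ ⟨hφ1, hφ2⟩
    constructor
    · intro x z
      have hs := br.toMultilinearMap.snoc_smul x c (φ z)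
      simp only [AlternatingMap.coe_multilinearMap] at hs
      simp [hφ1 x z, hs]
    · intro x y; simp [hφ2 x y]

end NLiePreamble

/-!
Invariance makes `J^⊥` an ideal, so by minimality either `J ⊆ J^⊥` or `J ∩ J^⊥ = 0`. In the
first case invariance moves an entry from `J` across `B`, so `B([J, J, G, …, G], G) ⊆ B(J, J) = 0`.
In the second, `G = J ⊕ J^⊥` is a sum of ideals bracketing to zero against each other, so a
bracket with an entry in `J` equals the bracket of the `J`-components of its entries: ideals of
`J` are ideals of `G`, and `[J, …, J] = 0` forces `[J, G, …, G] = 0`. Parts (2) and (3) are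
minimality applied to the ideals `[J, G, …, G] ⊆ J` and `J ∩ H`.
-/

section MinimalIdeals

variable {n : ℕ} {G : Type*} [AddCommGroup G] [Module ℂ G]

theorem exists_update_eq_smul_snoc (br : AlternatingMap ℂ G G (Fin (n + 2)))
    (w : Fin (n + 2) → G) (i : Fin (n + 2)) :
    ∃ (ε : ℤˣ) (x : Fin (n + 1) → G),
      ∀ g, br (Function.update w i g) = ε • br (Fin.snoc x g) := by
  set σ := Equiv.swap i (Fin.last (n + 1))
  refine ⟨Equiv.Perm.sign σ, Fin.init (w ∘ σ), fun g => ?_⟩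
  have hσ : Function.update w i g ∘ σ = Fin.snoc (Fin.init (w ∘ σ)) g := by
    rw [Function.update_comp_equiv, Equiv.symm_swap, Equiv.swap_apply_left,
      ← Fin.update_snoc_last (x := (w ∘ σ) (Fin.last _)), Fin.snoc_init_self]
  rw [br.map_congr_perm _ σ, hσ]

theorem exists_eq_smul_snoc (br : AlternatingMap ℂ G G (Fin (n + 2)))
    (w : Fin (n + 2) → G) (i : Fin (n + 2)) :
    ∃ (ε : ℤˣ) (x : Fin (n + 1) → G), br w = ε • br (Fin.snoc x (w i)) := by
  obtain ⟨ε, x, h⟩ := exists_update_eq_smul_snoc br w i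
  exact ⟨ε, x, by rw [← h, Function.update_eq_self]⟩

variable {br : AlternatingMap ℂ G G (Fin (n + 2))}

theorem IsIdeal.map_mem {I : Submodule ℂ G} (hI : IsIdeal br I) {w : Fin (n + 2) → G}
    {i : Fin (n + 2)} (hw : w i ∈ I) : br w ∈ I := by
  obtain ⟨ε, x, h⟩ := exists_eq_smul_snoc br w i
  rw [h]
  exact Submodule.smul_of_tower_mem _ ε (hI x _ hw)

theorem IsInvariantForm.apply_map_eq_neg {K : LinearMap.BilinForm ℂ G}
    (hK : IsInvariantForm br K) (w : Fin (n + 2) → G) (i : Fin (n + 2)) (g : G) :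
    K (br w) g = - K (br (Function.update w i g)) (w i) := by
  obtain ⟨ε, x, h⟩ := exists_update_eq_smul_snoc br w i
  rw [← Function.update_eq_self i w, h, Function.update_idem, Function.update_self, h,
    Units.smul_def, Units.smul_def, map_zsmul, map_zsmul,
    LinearMap.smul_apply, LinearMap.smul_apply, hK, smul_neg]

theorem bracketSpan_le {W : Fin (n + 2) → Submodule ℂ G} {K : Submodule ℂ G}
    (h : ∀ w : Fin (n + 2) → G, (∀ i, w i ∈ W i) → br w ∈ K) : bracketSpan br W ≤ K :=
  Submodule.span_le.mpr fun _ ⟨w, hw, hz⟩ => hz ▸ h w hw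

theorem map_mem_bracketSpan {W : Fin (n + 2) → Submodule ℂ G} {w : Fin (n + 2) → G}
    (hw : ∀ i, w i ∈ W i) : br w ∈ bracketSpan br W :=
  Submodule.subset_span ⟨w, hw, rfl⟩

theorem bracketSpan_mono {W W' : Fin (n + 2) → Submodule ℂ G} (h : ∀ i, W i ≤ W' i) :
    bracketSpan br W ≤ bracketSpan br W' :=
  bracketSpan_le fun _ hw => map_mem_bracketSpan fun i => h i (hw i)

theorem pairBracket_eq_bot {J H : Submodule ℂ G}
    (h : ∀ w : Fin (n + 2) → G, w 0 ∈ J → w 1 ∈ H → br w = 0) : pairBracket br J H = ⊥ :=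
  eq_bot_iff.mpr <| bracketSpan_le fun w hw => (Submodule.mem_bot ℂ).mpr <|
    h w (hw 0) (by simpa using hw 1)

theorem map_mem_idealBracket {J : Submodule ℂ G} {w : Fin (n + 2) → G} (hw : w 0 ∈ J) :
    br w ∈ idealBracket br J :=
  map_mem_bracketSpan <| Fin.cases hw fun _ => Submodule.mem_top

theorem IsIdeal.idealBracket_le {J : Submodule ℂ G} (hJ : IsIdeal br J) :
    idealBracket br J ≤ J :=
  bracketSpan_le fun _ hw => hJ.map_mem (hw 0)

theorem idealBracket_le_derivedAlg (J : Submodule ℂ G) : idealBracket br J ≤ derivedAlg br :=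
  bracketSpan_mono fun _ => le_top

theorem le_center_of_idealBracket_eq_bot {J : Submodule ℂ G} (h : idealBracket br J = ⊥) :
    J ≤ center br := fun x hx v _ y => by
  simpa [h] using map_mem_idealBracket (br := br) (w := Fin.cons x (Fin.cons v y)) hx

theorem isIdeal_span {S : Set G} (h : ∀ (y : Fin (n + 1) → G), ∀ s ∈ S,
    br (Fin.snoc y s) ∈ Submodule.span ℂ S) : IsIdeal br (Submodule.span ℂ S) := by
  intro y
  let ad : G →ₗ[ℂ] G := br.toMultilinearMap.toLinearMap (Fin.snoc y 0) (Fin.last _)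
  have had : ∀ z, ad z = br (Fin.snoc y z) := fun z => by
    simp [ad, Fin.update_snoc_last]
  have : Submodule.span ℂ S ≤ (Submodule.span ℂ S).comap ad :=
    Submodule.span_le.mpr fun s hs => by simpa [had] using h y s hs
  exact fun x hx => had x ▸ this hx

theorem IsIdeal.idealBracket {J : Submodule ℂ G} (hLie : IsNLie br) (hJ : IsIdeal br J) :
    IsIdeal br (idealBracket br J) := by
  refine isIdeal_span fun y _ ⟨w, hw, hz⟩ => ?_
  rw [hz, show br (Fin.snoc y (br w)) = _ from hLie w y]
  refine Submodule.sum_mem _ fun i _ => map_mem_idealBracket ?_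
  rcases eq_or_ne i 0 with rfl | hi
  · simpa [nAd] using hJ y _ (hw 0)
  · simpa [Function.update_of_ne hi.symm] using hw 0

theorem IsIdeal.inf {I J : Submodule ℂ G} (hI : IsIdeal br I) (hJ : IsIdeal br J) :
    IsIdeal br (I ⊓ J) :=
  fun y _ hx => ⟨hI y _ hx.1, hJ y _ hx.2⟩

theorem IsIdeal.orthogonal {B : LinearMap.BilinForm ℂ G} (hrefl : B.IsRefl)
    (hinv : IsInvariantForm br B) {J : Submodule ℂ G} (hJ : IsIdeal br J) :
    IsIdeal br (B.orthogonal J) := fun y x hx j hj =>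
  hrefl _ _ <| by rw [hinv, hx _ (hJ y j hj), neg_zero]

theorem IsMetric.isRefl {B : LinearMap.BilinForm ℂ G} (hB : IsMetric br B) : B.IsRefl :=
  fun x y h => by rwa [hB.2.1]

theorem IsMinimalIdeal.le_or_disjoint {J I : Submodule ℂ G} (hJ : IsMinimalIdeal br J)
    (hI : IsIdeal br I) : J ≤ I ∨ Disjoint J I := by
  rcases hJ.2.2 _ (hJ.1.inf hI) inf_le_left with h | h
  · exact Or.inr (disjoint_iff.mpr h)
  · exact Or.inl (inf_eq_left.mp h)

theorem IsMinimalIdeal.disjoint_of_ne {J H : Submodule ℂ G} (hJ : IsMinimalIdeal br J)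
    (hH : IsMinimalIdeal br H) (hne : J ≠ H) : Disjoint J H := by
  refine (hJ.le_or_disjoint hH.1).resolve_left fun hle => ?_
  rcases hH.2.2 J hJ.1 hle with h | h
  exacts [hJ.2.1 h, hne h]

theorem pairBracket_self_eq_bot_of_le_orthogonal {B : LinearMap.BilinForm ℂ G}
    (hnd : B.Nondegenerate) (hinv : IsInvariantForm br B) {J : Submodule ℂ G}
    (hJ : IsIdeal br J) (hiso : J ≤ B.orthogonal J) : pairBracket br J J = ⊥ :=
  pairBracket_eq_bot fun w h0 h1 => hnd.1 (br w) fun g => by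
    have hmem : br (Function.update w 1 g) ∈ J :=
      hJ.map_mem (i := 0) (by rwa [Function.update_of_ne Fin.zero_ne_one])
    rw [hinv.apply_map_eq_neg w 1 g, hiso h1 _ hmem, neg_zero]

theorem map_eq_zero_of_disjoint {J P : Submodule ℂ G} (hJ : IsIdeal br J) (hP : IsIdeal br P)
    (hJP : Disjoint J P) {w : Fin (n + 2) → G} {i j : Fin (n + 2)} (hi : w i ∈ J)
    (hj : w j ∈ P) : br w = 0 :=
  (Submodule.disjoint_def.mp hJP) _ (hJ.map_mem hi) (hP.map_mem hj)

theorem map_add_eq_of_disjoint {J P : Submodule ℂ G} (hJ : IsIdeal br J) (hP : IsIdeal br P)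
    (hJP : Disjoint J P) {a b : Fin (n + 2) → G} (hb : ∀ k, b k ∈ P) {i : Fin (n + 2)}
    (hai : a i ∈ J) (hbi : b i = 0) : br (a + b) = br a := by
  classical
  -- Besides `br a`, each term of the expansion has the entry `b i = 0`,
  -- or `a i ∈ J` together with some `b k ∈ P`.
  rw [br.map_add_univ, Finset.sum_eq_single Finset.univ ?_ (by simp), Finset.piecewise_univ]
  intro s _ hs
  by_cases his : i ∈ s
  · obtain ⟨k, hk⟩ : ∃ k, k ∉ s := by simpa [Finset.eq_univ_iff_forall] using hs
    refine map_eq_zero_of_disjoint hJ hP hJP (i := i) (j := k) ?_ ?_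
    · rwa [Finset.piecewise_eq_of_mem _ _ _ his]
    · rw [Finset.piecewise_eq_of_notMem _ _ _ hk]; exact hb k
  · exact br.map_coord_zero i (by rw [Finset.piecewise_eq_of_notMem _ _ _ his, hbi])

theorem exists_map_eq_of_isCompl {J P : Submodule ℂ G} (hJ : IsIdeal br J)
    (hP : IsIdeal br P) (hJP : IsCompl J P) (w : Fin (n + 2) → G) {i : Fin (n + 2)}
    (hw : w i ∈ J) : ∃ a : Fin (n + 2) → G, (∀ k, a k ∈ J) ∧ a i = w i ∧ br w = br a := by
  classical
  have hsplit : ∀ k, ∃ a ∈ J, ∃ b ∈ P, a + b = w k := fun k =>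
    Submodule.mem_sup.mp (hJP.sup_eq_top ▸ Submodule.mem_top)
  choose a ha b hb hab using hsplit
  refine ⟨Function.update a i (w i), fun k => ?_, Function.update_self .., ?_⟩
  · rcases eq_or_ne k i with rfl | hk
    · simpa using hw
    · simpa [Function.update_of_ne hk] using ha k
  · have hw' : w = Function.update a i (w i) + Function.update b i 0 := by
      ext k
      rcases eq_or_ne k i with rfl | hk
      · simp
      · simp [Function.update_of_ne hk, hab]
    conv_lhs => rw [hw']
    refine map_add_eq_of_disjoint hJ hP hJP.disjoint (i := i) (fun k => ?_) (by simpa using hw)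
      (by simp)
    rcases eq_or_ne k i with rfl | hk
    · simp
    · simpa [Function.update_of_ne hk] using hb k

theorem IsIdealOf.isIdeal_of_isCompl {J P I : Submodule ℂ G} (hI : IsIdealOf br J I)
    (hJ : IsIdeal br J) (hP : IsIdeal br P) (hJP : IsCompl J P) : IsIdeal br I := by
  intro y x hx
  obtain ⟨a, ha, hlast, heq⟩ :=
    exists_map_eq_of_isCompl hJ hP hJP (Fin.snoc y x) (i := Fin.last _) (by simpa using hI.1 hx)
  rw [heq, ← Fin.snoc_init_self a, hlast, Fin.snoc_last]
  exact hI.2 _ (fun _ => ha _) x hx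

theorem IsMinimalIdeal.abelian_or_simple_of_isCompl {J P : Submodule ℂ G}
    (hJ : IsMinimalIdeal br J) (hP : IsIdeal br P) (hJP : IsCompl J P) :
    pairBracket br J J = ⊥ ∨ IsSimpleAlg br J := by
  by_cases hder : derivedStep br J = ⊥
  · refine Or.inl <| pairBracket_eq_bot fun w h0 _ => ?_
    obtain ⟨a, ha, -, heq⟩ := exists_map_eq_of_isCompl hJ.1 hP hJP w h0
    have hmem : br a ∈ derivedStep br J := map_mem_bracketSpan ha
    rwa [hder, Submodule.mem_bot, ← heq] at hmem
  · exact Or.inr ⟨hder, fun I hI => hJ.2.2 I (hI.isIdeal_of_isCompl hJ.1 hP hJP) hI.1⟩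

end MinimalIdeals

variable {n : ℕ} {G : Type*} [AddCommGroup G] [Module ℂ G]

theorem minimal_ideal_structure_general
    (br : AlternatingMap ℂ G G (Fin (n + 2))) (hLie : IsNLie br)
    [FiniteDimensional ℂ G]
    (B : LinearMap.BilinForm ℂ G) (hB : IsMetric br B)
    (J : Submodule ℂ G) (hJ : IsMinimalIdeal br J) :
    (pairBracket br J J = ⊥ ∨ IsSimpleAlg br J) ∧
    (J ≤ derivedAlg br ∨ J ≤ center br) ∧
    (∀ H : Submodule ℂ G, IsMinimalIdeal br H → H ≠ J →
      pairBracket br J H = ⊥) := by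
  have hperp : IsIdeal br (B.orthogonal J) := hJ.1.orthogonal hB.isRefl hB.2.2
  refine ⟨?_, ?_, fun H hH hne => ?_⟩
  · rcases hJ.le_or_disjoint hperp with hiso | hdisj
    · exact Or.inl (pairBracket_self_eq_bot_of_le_orthogonal hB.1 hB.2.2 hJ.1 hiso)
    · exact hJ.abelian_or_simple_of_isCompl hperp
        ((LinearMap.BilinForm.isCompl_orthogonal_iff_disjoint hB.isRefl).mpr hdisj)
  · rcases hJ.2.2 _ (hJ.1.idealBracket hLie) hJ.1.idealBracket_le with h | h
    · exact Or.inr (le_center_of_idealBracket_eq_bot h)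
    · exact Or.inl (h ▸ idealBracket_le_derivedAlg J)
  · exact pairBracket_eq_bot fun w h0 h1 =>
      map_eq_zero_of_disjoint hJ.1 hH.1 (hJ.disjoint_of_ne hH hne.symm) h0 h1

theorem minimal_ideal_structure
    (br : AlternatingMap ℂ G G (Fin (n + 2))) (hLie : IsNLie br)
    [FiniteDimensional ℂ G]
    (B : LinearMap.BilinForm ℂ G) (hB : IsMetric br B)
    (hns : ¬ IsSimpleAlg br (⊤ : Submodule ℂ G))
    (hdim : 1 < Module.finrank ℂ G)
    (J : Submodule ℂ G) (hJ : IsMinimalIdeal br J) :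
    (pairBracket br J J = ⊥ ∨ IsSimpleAlg br J) ∧
    (J ≤ derivedAlg br ∨ J ≤ center br) ∧
    (∀ H : Submodule ℂ G, IsMinimalIdeal br H → H ≠ J →
      pairBracket br J H = ⊥) :=
  minimal_ideal_structure_general br hLie B hB J hJ
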